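/- arXiv:2011.11994 — 3 statements merged into one kernel-verified Lean document; each statement's English description precedes it below -/
import Mathlib

section
/- Let d ≥ 3 be an integer and 0 < β_1 ≤ β_2 ≤ … ≤ β_d real numbers. Define β̄_3 by 1/β̄_3 = (1/(d−2)) ∑_{l=3}^d 1/β_l, set a_l = β̄_3/(β_l(2β̄_3 + d − 2)) for l = 3, …, d, and let a_1, a_2 be reals with a_1 ≥ β̄_3/(β_1(2β̄_3 + d − 2)) and a_2 ≥ β̄_3/(β_2(2β̄_3 + d − 2)). Then for every u ∈ (0, 1]: ∑_{l=1}^d u^{2 a_l β_l} + u^{1 − ∑_{l=3}^d a_l} ≤ (d + 1) · u^{2β̄_3/(2β̄_3 + d − 2)}. -/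
/-- With the rate-optimal bandwidth exponents
`a_l = β̄₃/(β_l(2β̄₃ + d − 2))` for `l ≥ 3` and `a_1, a_2` at least as large as the
corresponding quantities, for every `u ∈ (0,1]` the bias–variance bound
`∑_{l=1}^d u^{2 a_l β_l} + u^{1 − ∑_{l≥3} a_l}` is at most
`(d+1) u^{2β̄₃/(2β̄₃ + d − 2)}`. -/
theorem stmt3 (d : ℕ) (hd : 3 ≤ d) (β : ℕ → ℝ)
    (hpos : ∀ l ∈ Finset.Icc 1 d, 0 < β l)
    (hmono : ∀ i j, 1 ≤ i → i ≤ j → j ≤ d → β i ≤ β j)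
    (βbar3 : ℝ)
    (hbar3 : 1 / βbar3 = (1 / ((d : ℝ) - 2)) * ∑ l ∈ Finset.Icc 3 d, 1 / β l)
    (a : ℕ → ℝ)
    (ha : ∀ l ∈ Finset.Icc 3 d, a l = βbar3 / (β l * (2 * βbar3 + (d : ℝ) - 2)))
    (ha1 : βbar3 / (β 1 * (2 * βbar3 + (d : ℝ) - 2)) ≤ a 1)
    (ha2 : βbar3 / (β 2 * (2 * βbar3 + (d : ℝ) - 2)) ≤ a 2)
    (u : ℝ) (hu0 : 0 < u) (hu1 : u ≤ 1) :
    (∑ l ∈ Finset.Icc 1 d, u ^ (2 * a l * β l)) + u ^ (1 - ∑ l ∈ Finset.Icc 3 d, a l)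
      ≤ ((d : ℝ) + 1) * u ^ (2 * βbar3 / (2 * βbar3 + (d : ℝ) - 2)) := by
  have hd2 : (0:ℝ) < (d : ℝ) - 2 := by
    have : (3:ℝ) ≤ d := by exact_mod_cast hd
    linarith
  have hsub : Finset.Icc 3 d ⊆ Finset.Icc 1 d := by
    intro x hx
    simp only [Finset.mem_Icc] at hx ⊢
    omega
  have hβ3pos : ∀ l ∈ Finset.Icc 3 d, 0 < β l := fun l hl => hpos l (hsub hl)
  have hne : (Finset.Icc 3 d).Nonempty := ⟨3, by simp [Finset.mem_Icc]; omega⟩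
  have hSpos : 0 < ∑ l ∈ Finset.Icc 3 d, 1 / β l := by
    apply Finset.sum_pos (fun l hl => by
      have := hβ3pos l hl; positivity) hne
  have hbpos : 0 < βbar3 := by
    have h1 : 0 < 1 / βbar3 := by
      rw [hbar3]; positivity
    exact one_div_pos.mp h1
  set c : ℝ := 2 * βbar3 + (d : ℝ) - 2 with hc_def
  have hc : 0 < c := by simp only [hc_def]; linarith
  have hS : ∑ l ∈ Finset.Icc 3 d, 1 / β l = ((d : ℝ) - 2) / βbar3 := by
    field_simp at hbar3
    field_simp
    linarith [hbar3]
  have hsuma : ∑ l ∈ Finset.Icc 3 d, a l = ((d : ℝ) - 2) / c := by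
    have : ∑ l ∈ Finset.Icc 3 d, a l = (βbar3 / c) * ∑ l ∈ Finset.Icc 3 d, 1 / β l := by
      rw [Finset.mul_sum]
      apply Finset.sum_congr rfl
      intro l hl
      rw [ha l hl, div_mul_div_comm, mul_one, mul_comm c (β l)]
    rw [this, hS]
    field_simp
  have hexp : 1 - ∑ l ∈ Finset.Icc 3 d, a l = 2 * βbar3 / c := by
    rw [hsuma]
    field_simp
    simp only [hc_def]; ring
  have hterm : ∀ l ∈ Finset.Icc 1 d, u ^ (2 * a l * β l) ≤ u ^ (2 * βbar3 / c) := by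
    intro l hl
    have hβl : 0 < β l := hpos l hl
    by_cases h3 : 3 ≤ l
    · have hl' : l ∈ Finset.Icc 3 d := by
        simp only [Finset.mem_Icc] at hl ⊢; omega
      have : 2 * a l * β l = 2 * βbar3 / c := by
        rw [ha l hl']
        field_simp
      rw [this]
    · apply Real.rpow_le_rpow_of_exponent_ge hu0 hu1
      have hge : βbar3 / (β l * c) ≤ a l := by
        interval_cases l
        · simp only [Finset.mem_Icc] at hl; omega
        · exact ha1
        · exact ha2
      have h1 : 2 * βbar3 / c = 2 * (βbar3 / (β l * c)) * β l := by
        field_simp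
      rw [h1]
      have : 2 * (βbar3 / (β l * c)) ≤ 2 * a l := by linarith
      exact mul_le_mul_of_nonneg_right this hβl.le
  have hsum : ∑ l ∈ Finset.Icc 1 d, u ^ (2 * a l * β l)
      ≤ (d : ℝ) * u ^ (2 * βbar3 / c) := by
    calc ∑ l ∈ Finset.Icc 1 d, u ^ (2 * a l * β l)
        ≤ ∑ l ∈ Finset.Icc 1 d, u ^ (2 * βbar3 / c) :=
          Finset.sum_le_sum hterm
      _ = (d : ℝ) * u ^ (2 * βbar3 / c) := by
          rw [Finset.sum_const, Nat.card_Icc]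
          simp [nsmul_eq_mul]
  rw [hexp]
  have : ((d : ℝ) + 1) * u ^ (2 * βbar3 / c) = (d : ℝ) * u ^ (2 * βbar3 / c) + u ^ (2 * βbar3 / c) := by ring
  rw [this]
  linarith
end

section
/- Let (Ω, 𝓕) be a measurable space, let P_0 and P_1 be probability measures on (Ω, 𝓕) with P_1 absolutely continuous with respect to P_0, and let Z = dP_1/dP_0 be the Radon–Nikodym derivative. Then for every measurable function π̂ : Ω → ℝ, all real numbers v_0, v_1, and every λ ≥ 1: (1/2) ∫ (π̂ − v_1)² dP_1 + (1/2) ∫ (π̂ − v_0)² dP_0 ≥ ((v_1 − v_0)² / (8λ)) · P_0({Z ≥ 1/λ}). -/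
/-!
On the superlevel set `A = {Z ≥ 1/λ}` of the likelihood ratio both measures put weight at
least `1/λ` times `P₀`, so the two risks together dominate
`(1/λ) ∫_A ((π̂ - v₁)² + (π̂ - v₀)²) dP₀`.
The integrand is at least `(v₁ - v₀)² / 2` pointwise: no estimator can be close to both values.
-/

open MeasureTheory
open scoped ENNReal

namespace MeasureTheory.Measure

variable {α : Type*} {m : MeasurableSpace α}

/-- The singular part of `μ` with respect to `ν` only adds to the right-hand side. -/
theorem lintegral_rnDeriv_mul_le (μ ν : Measure α) {f : α → ℝ≥0∞} (hf : Measurable f) :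
    ∫⁻ x, μ.rnDeriv ν x * f x ∂ν ≤ ∫⁻ x, f x ∂μ :=
  calc ∫⁻ x, μ.rnDeriv ν x * f x ∂ν = ∫⁻ x, f x ∂ν.withDensity (μ.rnDeriv ν) :=
        (lintegral_withDensity_eq_lintegral_mul ν (measurable_rnDeriv μ ν) hf).symm
    _ ≤ ∫⁻ x, f x ∂μ := lintegral_mono' (withDensity_rnDeriv_le μ ν) le_rfl

theorem const_mul_setLIntegral_rnDeriv_superlevel_le (μ ν : Measure α) {f₁ : α → ℝ≥0∞}
    (hf₁ : Measurable f₁) (f₀ : α → ℝ≥0∞) {c : ℝ≥0∞} (hc : c ≤ 1) :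
    c * ∫⁻ x in {x | c ≤ μ.rnDeriv ν x}, f₁ x + f₀ x ∂ν
      ≤ ∫⁻ x, f₁ x ∂μ + ∫⁻ x, f₀ x ∂ν := by
  have hA : MeasurableSet {x | c ≤ μ.rnDeriv ν x} :=
    measurableSet_le measurable_const (measurable_rnDeriv μ ν)
  calc c * ∫⁻ x in {x | c ≤ μ.rnDeriv ν x}, f₁ x + f₀ x ∂ν
      = ∫⁻ x in {x | c ≤ μ.rnDeriv ν x}, c * f₁ x + c * f₀ x ∂ν := by
        rw [← lintegral_const_mul' c _ (ne_top_of_le_ne_top ENNReal.one_ne_top hc)]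
        simp only [mul_add]
    _ ≤ ∫⁻ x in {x | c ≤ μ.rnDeriv ν x}, μ.rnDeriv ν x * f₁ x + f₀ x ∂ν := by
        refine setLIntegral_mono' hA fun x hx => add_le_add ?_ ?_
        · exact mul_le_mul_left hx _
        · exact mul_le_of_le_one_left zero_le hc
    _ ≤ ∫⁻ x, μ.rnDeriv ν x * f₁ x + f₀ x ∂ν := setLIntegral_le_lintegral _ _
    _ = ∫⁻ x, μ.rnDeriv ν x * f₁ x ∂ν + ∫⁻ x, f₀ x ∂ν :=
        lintegral_add_left ((measurable_rnDeriv μ ν).mul hf₁) _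
    _ ≤ ∫⁻ x, f₁ x ∂μ + ∫⁻ x, f₀ x ∂ν :=
        add_le_add_left (lintegral_rnDeriv_mul_le μ ν hf₁) _

end MeasureTheory.Measure

theorem ENNReal.ofReal_sq_sub_div_two_le (x a b : ℝ) :
    ENNReal.ofReal ((b - a) ^ 2 / 2)
      ≤ ENNReal.ofReal ((x - b) ^ 2) + ENNReal.ofReal ((x - a) ^ 2) := by
  rw [← ENNReal.ofReal_add (sq_nonneg _) (sq_nonneg _)]
  exact ENNReal.ofReal_le_ofReal (by nlinarith [sq_nonneg (2 * x - a - b)])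

theorem stmt10_general {Ω : Type*} [MeasurableSpace Ω] (P0 P1 : Measure Ω)
    (piHat : Ω → ℝ) (hmeas : Measurable piHat)
    (v0 v1 lam : ℝ) (hlam : 1 ≤ lam) :
    ENNReal.ofReal ((v1 - v0) ^ 2 / (8 * lam)) *
        P0 {ω | ENNReal.ofReal (1 / lam) ≤ P1.rnDeriv P0 ω}
      ≤ (1 / 2) * ∫⁻ ω, ENNReal.ofReal ((piHat ω - v1) ^ 2) ∂P1 +
        (1 / 2) * ∫⁻ ω, ENNReal.ofReal ((piHat ω - v0) ^ 2) ∂P0 := by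
  set c := ENNReal.ofReal (1 / lam)
  set A := {ω | c ≤ P1.rnDeriv P0 ω}
  have hlam_pos : 0 < lam := by linarith
  have hc : c ≤ 1 := ENNReal.ofReal_le_one.2 ((div_le_one hlam_pos).2 hlam)
  have hconst : ENNReal.ofReal ((v1 - v0) ^ 2 / (8 * lam))
      ≤ 1 / 2 * (c * ENNReal.ofReal ((v1 - v0) ^ 2 / 2)) := by
    rw [← ENNReal.ofReal_mul (by positivity), one_div (2 : ℝ≥0∞),
      ← ENNReal.ofReal_ofNat 2, ← ENNReal.ofReal_inv_of_pos two_pos,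
      ← ENNReal.ofReal_mul (by norm_num)]
    refine ENNReal.ofReal_le_ofReal ?_
    rw [show 2⁻¹ * (1 / lam * ((v1 - v0) ^ 2 / 2)) = (v1 - v0) ^ 2 / (4 * lam) by ring]
    gcongr
    norm_num
  calc ENNReal.ofReal ((v1 - v0) ^ 2 / (8 * lam)) * P0 A
      ≤ 1 / 2 * (c * ∫⁻ _ in A, ENNReal.ofReal ((v1 - v0) ^ 2 / 2) ∂P0) := by
        rw [setLIntegral_const, ← mul_assoc, ← mul_assoc]
        gcongr
        rw [mul_assoc]
        exact hconst
    _ ≤ 1 / 2 * (c * ∫⁻ ω in A, ENNReal.ofReal ((piHat ω - v1) ^ 2)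
          + ENNReal.ofReal ((piHat ω - v0) ^ 2) ∂P0) := by
        gcongr with ω
        exact ENNReal.ofReal_sq_sub_div_two_le _ _ _
    _ ≤ 1 / 2 * (∫⁻ ω, ENNReal.ofReal ((piHat ω - v1) ^ 2) ∂P1
          + ∫⁻ ω, ENNReal.ofReal ((piHat ω - v0) ^ 2) ∂P0) := by
        gcongr
        exact Measure.const_mul_setLIntegral_rnDeriv_superlevel_le P1 P0
          ((hmeas.sub_const v1).pow_const 2).ennreal_ofReal _ hc
    _ = _ := mul_add _ _ _

/-- Two-hypotheses reduction: if `P₁ ≪ P₀` with Radon–Nikodym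
derivative `Z = dP₁/dP₀`, then for any estimator `π̂`, values `v₀, v₁` and `λ ≥ 1`,
`(1/2)∫(π̂ − v₁)² dP₁ + (1/2)∫(π̂ − v₀)² dP₀ ≥ ((v₁ − v₀)²/(8λ)) P₀(Z ≥ 1/λ)`. -/
theorem stmt10 {Ω : Type*} [MeasurableSpace Ω] (P0 P1 : Measure Ω)
    [IsProbabilityMeasure P0] [IsProbabilityMeasure P1]
    (hac : P1 ≪ P0)
    (piHat : Ω → ℝ) (hmeas : Measurable piHat)
    (v0 v1 lam : ℝ) (hlam : 1 ≤ lam) :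
    ENNReal.ofReal ((v1 - v0) ^ 2 / (8 * lam)) *
        P0 {ω | ENNReal.ofReal (1 / lam) ≤ P1.rnDeriv P0 ω}
      ≤ (1 / 2) * ∫⁻ ω, ENNReal.ofReal ((piHat ω - v1) ^ 2) ∂P1 +
        (1 / 2) * ∫⁻ ω, ENNReal.ofReal ((piHat ω - v0) ^ 2) ∂P0 :=
  stmt10_general P0 P1 piHat hmeas v0 v1 lam hlam
end

section
/- Let d ≥ 3 be an integer and ρ > 0. Then there exists a constant c > 0 such that for every h = (h_1, …, h_d) with 0 < h_j < 1/2 for all j and h_1 h_2 ≤ (∏_{j=3}^d h_j)^{2/(d−2)}, setting δ_1 = h_1 h_2, δ_2 = (∏_{j=3}^d h_j)^{2/(d−2)}, and D = max( −(2/ρ) log(∏_{j=1}^d h_j), 1 ), the following holds: δ_1/∏_{l=1}^d h_l + (|log δ_1| + |log δ_2|)/∏_{j=3}^d h_j + δ_2 + δ_2^{1 − d/2} + D + (∏_{j=1}^d h_j)^{−2} e^{−ρ D} ≤ c · (∑_{j=1}^d |log h_j|) / ∏_{j=3}^d h_j. -/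
/-!
Write `Q = ∏_{j≥3} h_j`, `P = h₁ h₂ Q = ∏_j h_j` and `S = ∑_j |log h_j|`. Since every `h_j < 1/2`,
`S ≥ d log 2 > 1`, and the logarithm of any subproduct of the `h_j` is at most `S` in absolute
value. Then `δ₁ / P = δ₂ ^ (1 - d/2) = 1/Q`, `δ₂ ≤ 1`, `|log δ₂| ≤ 2 |log Q|`, `D ≤ (2/ρ + 1) S`,
and `D ≥ -(2/ρ) log P` gives `e^{-ρD} ≤ P²`. As `Q ≤ 1`, each term is a multiple of `S / Q`, and
the constant `c = 8 + 2/ρ` works.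
-/

open Finset Real

theorem Finset.prod_Icc_one_eq_mul_mul_prod_Icc_three {M : Type*} [CommMonoid M] (f : ℕ → M)
    {d : ℕ} (hd : 2 ≤ d) : ∏ j ∈ Icc 1 d, f j = f 1 * f 2 * ∏ j ∈ Icc 3 d, f j := by
  rw [show Icc 1 d = Ioc 0 d from Icc_add_one_left_eq_Ioc 0 d,
    show Icc 3 d = Ioc 2 d from Icc_add_one_left_eq_Ioc 2 d,
    ← prod_Ioc_consecutive f (Nat.zero_le 2) hd]
  simp [prod_Ioc_succ_top]

theorem Real.abs_log_prod_le_sum_abs_log {ι : Type*} {s t : Finset ι} {f : ι → ℝ} (hst : s ⊆ t)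
    (hf : ∀ i ∈ s, f i ≠ 0) : |log (∏ i ∈ s, f i)| ≤ ∑ i ∈ t, |log (f i)| := by
  rw [log_prod hf]
  exact (abs_sum_le_sum_abs _ _).trans
    (sum_le_sum_of_subset_of_nonneg hst fun _ _ _ ↦ abs_nonneg _)

theorem Real.log_two_le_abs_log {x : ℝ} (hx₀ : 0 < x) (hx : x ≤ 1 / 2) : log 2 ≤ |log x| := by
  have : log x ≤ -log 2 := by simpa [log_inv] using log_le_log hx₀ hx
  exact (le_neg.mpr this).trans (neg_le_abs _)

theorem one_le_sum_abs_log {d : ℕ} (hd : 3 ≤ d) {h : ℕ → ℝ}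
    (hh : ∀ j ∈ Icc 1 d, 0 < h j ∧ h j < 1 / 2) : 1 ≤ ∑ j ∈ Icc 1 d, |log (h j)| := by
  have hsum := card_nsmul_le_sum _ _ _ fun j hj ↦ log_two_le_abs_log (hh j hj).1 (hh j hj).2.le
  rw [Nat.card_Icc, Nat.add_sub_cancel, nsmul_eq_mul] at hsum
  have hd' : (3 : ℝ) ≤ d := by exact_mod_cast hd
  nlinarith [log_two_gt_d9]

theorem Real.rpow_two_div_sub_two_rpow_one_sub_half {Q d : ℝ} (hQ : 0 ≤ Q) (hd : d ≠ 2) :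
    (Q ^ (2 / (d - 2))) ^ (1 - d / 2) = Q⁻¹ := by
  have hexp : 2 / (d - 2) * (1 - d / 2) = -1 := by
    field_simp [sub_ne_zero.mpr hd]
    ring
  rw [← rpow_mul hQ, hexp, rpow_neg_one]

theorem Real.abs_log_rpow_two_div_sub_two_le {Q d : ℝ} (hQ : 0 < Q) (hd : 3 ≤ d) :
    |log (Q ^ (2 / (d - 2)))| ≤ 2 * |log Q| := by
  have he₀ : 0 ≤ 2 / (d - 2) := div_nonneg zero_le_two (by linarith)
  have he₁ : 2 / (d - 2) ≤ 2 := by rw [div_le_iff₀ (by linarith)]; linarith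
  rw [log_rpow hQ, abs_mul, abs_of_nonneg he₀]
  exact mul_le_mul_of_nonneg_right he₁ (abs_nonneg _)

theorem Real.max_neg_two_div_mul_log_le {P S ρ : ℝ} (hρ : 0 < ρ) (hP : |log P| ≤ S)
    (hS : 1 ≤ S) : max (-(2 / ρ) * log P) 1 ≤ (2 / ρ + 1) * S := by
  have hρ' : 0 < 2 / ρ := by positivity
  have : -(2 / ρ) * log P ≤ 2 / ρ * S := by
    rw [neg_mul, ← mul_neg]
    exact mul_le_mul_of_nonneg_left ((neg_le_abs _).trans hP) hρ'.le
  apply max_le <;> nlinarith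

theorem Real.rpow_neg_two_mul_exp_le_one {P ρ D : ℝ} (hP : 0 < P) (hρ : 0 < ρ)
    (hD : -(2 / ρ) * log P ≤ D) : P ^ (-2 : ℝ) * exp (-ρ * D) ≤ 1 := by
  have hexp : -ρ * D ≤ log (P ^ (2 : ℝ)) := by
    rw [log_rpow hP]
    have := mul_le_mul_of_nonneg_left hD hρ.le
    rw [show ρ * (-(2 / ρ) * log P) = -(2 * log P) by field_simp] at this
    linarith
  calc P ^ (-2 : ℝ) * exp (-ρ * D) ≤ P ^ (-2 : ℝ) * P ^ (2 : ℝ) := by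
        gcongr
        exact (exp_le_exp.mpr hexp).trans_eq (exp_log (by positivity))
    _ = 1 := by rw [← rpow_add hP]; norm_num

theorem interval_contributions_le {d ρ δ₁ Q S : ℝ} (hd : 3 ≤ d) (hρ : 0 < ρ) (hδ₁ : 0 < δ₁)
    (hQ₀ : 0 < Q) (hQ₁ : Q ≤ 1) (hS : 1 ≤ S) (hlogδ₁ : |log δ₁| ≤ S) (hlogQ : |log Q| ≤ S)
    (hlogP : |log (δ₁ * Q)| ≤ S) :
    δ₁ / (δ₁ * Q) + (|log δ₁| + |log (Q ^ (2 / (d - 2)))|) / Q + Q ^ (2 / (d - 2))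
        + (Q ^ (2 / (d - 2))) ^ (1 - d / 2) + max (-(2 / ρ) * log (δ₁ * Q)) 1
        + (δ₁ * Q) ^ (-2 : ℝ) * exp (-ρ * max (-(2 / ρ) * log (δ₁ * Q)) 1)
      ≤ (8 + 2 / ρ) * S / Q := by
  have le_div : ∀ {x}, x ≤ S → x ≤ S / Q := fun hx ↦ hx.trans (le_div_self (by linarith) hQ₀ hQ₁)
  have hinv : Q⁻¹ ≤ S / Q := by rw [inv_eq_one_div]; gcongr
  have h₁ : δ₁ / (δ₁ * Q) ≤ S / Q := by rwa [div_mul_cancel_left₀ hδ₁.ne']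
  have h₂ : (|log δ₁| + |log (Q ^ (2 / (d - 2)))|) / Q ≤ 3 * (S / Q) := by
    rw [← mul_div_assoc]
    gcongr
    linarith [abs_log_rpow_two_div_sub_two_le hQ₀ hd]
  have h₃ : Q ^ (2 / (d - 2)) ≤ S / Q :=
    le_div <| (rpow_le_one hQ₀.le hQ₁ (div_nonneg zero_le_two (by linarith))).trans hS
  have h₄ : (Q ^ (2 / (d - 2))) ^ (1 - d / 2) ≤ S / Q := by
    rwa [rpow_two_div_sub_two_rpow_one_sub_half hQ₀.le (by linarith)]
  have h₅ : max (-(2 / ρ) * log (δ₁ * Q)) 1 ≤ (2 / ρ + 1) * S / Q :=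
    (max_neg_two_div_mul_log_le hρ hlogP hS).trans (le_div_self (by positivity) hQ₀ hQ₁)
  have h₆ : (δ₁ * Q) ^ (-2 : ℝ) * exp (-ρ * max (-(2 / ρ) * log (δ₁ * Q)) 1) ≤ S / Q :=
    le_div <| (rpow_neg_two_mul_exp_le_one (by positivity) hρ (le_max_left _ _)).trans hS
  have : (8 + 2 / ρ) * S / Q = 7 * (S / Q) + (2 / ρ + 1) * S / Q := by ring
  linarith

/-- Parameter-optimization step of the variance bound: for `d ≥ 3`
and mixing rate `ρ > 0` there is a constant `c > 0` such that for bandwidths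
`0 < h_j < 1/2` with `h_1 h_2 ≤ (∏_{j≥3} h_j)^{2/(d−2)}`, with `δ₁ = h_1 h_2`,
`δ₂ = (∏_{j≥3} h_j)^{2/(d−2)}` and `D = max(−(2/ρ) log ∏_j h_j, 1)`, the quantity
`δ₁/∏_l h_l + (|log δ₁| + |log δ₂|)/∏_{j≥3} h_j + δ₂ + δ₂^{1−d/2} + D
+ (∏_j h_j)^{−2} e^{−ρD}` is at most `c (∑_j |log h_j|)/∏_{j≥3} h_j`. -/
theorem stmt18 (d : ℕ) (hd : 3 ≤ d) (ρ : ℝ) (hρ : 0 < ρ) :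
    ∃ c > 0, ∀ h : ℕ → ℝ,
      (∀ j ∈ Finset.Icc 1 d, 0 < h j ∧ h j < 1 / 2) →
      h 1 * h 2 ≤ (∏ j ∈ Finset.Icc 3 d, h j) ^ ((2 : ℝ) / ((d : ℝ) - 2)) →
      ∀ δ1 δ2 D : ℝ,
        δ1 = h 1 * h 2 →
        δ2 = (∏ j ∈ Finset.Icc 3 d, h j) ^ ((2 : ℝ) / ((d : ℝ) - 2)) →
        D = max (-(2 / ρ) * Real.log (∏ j ∈ Finset.Icc 1 d, h j)) 1 →
        δ1 / (∏ l ∈ Finset.Icc 1 d, h l)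
            + (|Real.log δ1| + |Real.log δ2|) / (∏ j ∈ Finset.Icc 3 d, h j)
            + δ2 + δ2 ^ (1 - (d : ℝ) / 2) + D
            + (∏ j ∈ Finset.Icc 1 d, h j) ^ (-(2 : ℝ)) * Real.exp (-ρ * D)
          ≤ c * (∑ j ∈ Finset.Icc 1 d, |Real.log (h j)|)
              / ∏ j ∈ Finset.Icc 3 d, h j := by
  refine ⟨8 + 2 / ρ, by positivity, ?_⟩
  rintro h hh - δ1 δ2 D rfl rfl rfl
  have hpos : ∀ j ∈ Icc 1 d, h j ≠ 0 := fun j hj ↦ (hh j hj).1.ne'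
  have h12 : ({1, 2} : Finset ℕ) ⊆ Icc 1 d := by
    intro j hj
    simp only [mem_insert, mem_singleton] at hj
    simp only [mem_Icc]
    omega
  have h3 : Icc 3 d ⊆ Icc 1 d := Icc_subset_Icc_left (by norm_num)
  have hlogδ₁ := abs_log_prod_le_sum_abs_log h12 fun j hj ↦ hpos j (h12 hj)
  have hlogP := abs_log_prod_le_sum_abs_log subset_rfl hpos
  rw [prod_pair (by norm_num)] at hlogδ₁
  rw [prod_Icc_one_eq_mul_mul_prod_Icc_three h (by omega)] at hlogP ⊢
  exact interval_contributions_le (by exact_mod_cast hd) hρ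
    (mul_pos (hh 1 (h12 (by simp))).1 (hh 2 (h12 (by simp))).1)
    (prod_pos fun j hj ↦ (hh j (h3 hj)).1)
    (prod_le_one (fun j hj ↦ (hh j (h3 hj)).1.le) fun j hj ↦ by linarith [(hh j (h3 hj)).2])
    (one_le_sum_abs_log hd hh) hlogδ₁
    (abs_log_prod_le_sum_abs_log h3 fun j hj ↦ hpos j (h3 hj)) hlogP
end
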